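/- (Proposition 4, conditional weighted moments of the truncated multivariate Student's-t.) Let ν > 0, μ ∈ ℝ^p, Σ positive definite and partitioned conformably with y = (y1,y2), p1 + p2 = p, and r ∈ ℝ with ν + p1 + 2r > 0. Fix y1 ∈ ℝ^{p1} and set δ1 = (y1−μ1)ᵀΣ11⁻¹(y1−μ1), μ_{2.1} = μ2 + Σ21Σ11⁻¹(y1−μ1), Σ_{22.1} = Σ22 − Σ21Σ11⁻¹Σ12, Σ̃_{22.1} = ((ν+δ1)/(ν+p1))Σ_{22.1}, Σ̃*_{22.1} = ((ν+δ1)/(ν+2r+p1))Σ_{22.1}, and d_p(p1,ν,r) = (ν+p)^r Γ((p+ν)/2)Γ((p1+ν+2r)/2)/(Γ((p1+ν)/2)Γ((p+ν+2r)/2)). Then for every Borel set B ⊆ ℝ^{p2} and every Borel function f : ℝ^{p2} → ℝ such that f(·)·t_{p2}(·|μ_{2.1},Σ̃*_{22.1},ν+p1+2r) is integrable on B, ∫_B ((ν+p)/(ν+δ(y1,y2)))^r f(y2) t_{p2}(y2|μ_{2.1},Σ̃_{22.1},ν+p1) dy2 = (d_p(p1,ν,r)/(ν+δ1)^r) ·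 ∫_B f(y2) t_{p2}(y2|μ_{2.1},Σ̃*_{22.1},ν+p1+2r) dy2. In particular, for B = (a2,b2) a rectangle and f with values 1, the coordinates, or products of pairs of coordinates, this yields the paper's formula E[((ν+p)/(ν+δ(Y)))^r Y2^{(k)} | Y1 = y1] = (d_p(p1,ν,r)/(ν+δ1)^r) · (T_{p2}(a2,b2;μ_{2.1},Σ̃*_{22.1},ν+p1+2r)/T_{p2}(a2,b2;μ_{2.1},Σ̃_{22.1},ν+p1)) · E[W2^{(k)}], where W2 ∼ t_{p2}(μ_{2.1},Σ̃*_{22.1},ν+p1+2r) truncated to (a2,b2). -/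

import Mathlib

open MeasureTheory Matrix Real Filter

/-- Squared Mahalanobis distance δ(x) = (x−μ)ᵀ S⁻¹ (x−μ). -/
noncomputable def mahalanobis {n : Type*} [Fintype n] [DecidableEq n]
    (μ : n → ℝ) (S : Matrix n n ℝ) (x : n → ℝ) : ℝ :=
  (x - μ) ⬝ᵥ (S⁻¹ *ᵥ (x - μ))

/-- The multivariate Student's-t density t_p(x|μ,S,ν). -/
noncomputable def tPdf {n : Type*} [Fintype n] [DecidableEq n]
    (μ : n → ℝ) (S : Matrix n n ℝ) (ν : ℝ) (x : n → ℝ) : ℝ :=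
  Real.Gamma (((Fintype.card n : ℝ) + ν) / 2) /
      (Real.Gamma (ν / 2) * Real.pi ^ ((Fintype.card n : ℝ) / 2) *
        ν ^ ((Fintype.card n : ℝ) / 2)) *
    S.det ^ (-(1 : ℝ) / 2) *
    (1 + mahalanobis μ S x / ν) ^ (-(((Fintype.card n : ℝ) + ν) / 2))

/-- The multivariate normal density φ_p(x|μ,S). -/
noncomputable def normalPdf {n : Type*} [Fintype n] [DecidableEq n]
    (μ : n → ℝ) (S : Matrix n n ℝ) (x : n → ℝ) : ℝ :=
  (2 * Real.pi) ^ (-(Fintype.card n : ℝ) / 2) * S.det ^ (-(1 : ℝ) / 2) *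
    Real.exp (-(mahalanobis μ S x) / 2)

/-- The Gamma(a,b) density h(u|a,b) (for u > 0). -/
noncomputable def gammaPdf (a b u : ℝ) : ℝ :=
  b ^ a / Real.Gamma a * u ^ (a - 1) * Real.exp (-(b * u))

/-- Standard normal pdf. -/
noncomputable def stdNormalPdf (x : ℝ) : ℝ :=
  (Real.sqrt (2 * Real.pi))⁻¹ * Real.exp (-(x ^ 2) / 2)

/-- Standard normal cdf. -/
noncomputable def stdNormalCdf (x : ℝ) : ℝ :=
  ∫ t in Set.Iic x, stdNormalPdf t

/-- Univariate Student's-t density with location c, scale s², κ degrees of freedom. -/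
noncomputable def tPdf1 (c s2 κ y : ℝ) : ℝ :=
  Real.Gamma ((1 + κ) / 2) /
      (Real.Gamma (κ / 2) * Real.sqrt (Real.pi * κ) * Real.sqrt s2) *
    (1 + (y - c) ^ 2 / (κ * s2)) ^ (-((1 + κ) / 2))

/-!
By the Schur-complement factorisation of `Σ⁻¹`, the joint Mahalanobis distance splits as
`δ(y₁, y₂) = δ₁ + δ₂.₁(y₂)`, where `δ₂.₁` is the Mahalanobis distance of `y₂` for the mean
`μ₂.₁` and scale `Σ₂₂.₁`. For `c > 0` the density `t(y₂ | μ₂.₁, (c/κ) Σ₂₂.₁, κ)` is, up to a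
constant, `c^(κ/2) (c + δ₂.₁)^(-(p₂+κ)/2)`. With `c = ν + δ₁` and `κ = ν + p₁`, multiplying by
`(ν + δ)^(-r) = (c + δ₂.₁)^(-r)` just replaces `κ` by `κ + 2r`, so the two integrands are
proportional pointwise and the identity holds on every set `B`.
-/

open scoped ComplexOrder

namespace Matrix

theorem PosDef.posDef_block₁₁ {m n 𝕜 : Type*} [RCLike 𝕜] {A : Matrix m m 𝕜}
    {B : Matrix m n 𝕜} {C : Matrix n m 𝕜} {D : Matrix n n 𝕜} (h : (fromBlocks A B C D).PosDef) :
    A.PosDef := by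
  convert h.submatrix Sum.inl_injective
  ext; rfl

variable {m n : Type*} [Fintype m] [DecidableEq m] [Fintype n] [DecidableEq n]

theorem inv_fromBlocks_eq_of_isUnit_det₁₁ {α : Type*} [CommRing α] (A : Matrix m m α)
    (B : Matrix m n α) (C : Matrix n m α) (D : Matrix n n α) (hA : IsUnit A.det)
    (hE : IsUnit (D - C * A⁻¹ * B).det) :
    (fromBlocks A B C D)⁻¹ =
      fromBlocks 1 (-(A⁻¹ * B)) 0 1 * fromBlocks A⁻¹ 0 0 (D - C * A⁻¹ * B)⁻¹ *
        fromBlocks 1 0 (-(C * A⁻¹)) 1 := by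
  let := A.invertibleOfIsUnitDet hA
  rw [fromBlocks_eq_of_invertible₁₁ A B C D, invOf_eq_nonsing_inv, mul_inv_rev, mul_inv_rev,
    inv_fromBlocks_zero₂₁_of_isUnit_iff _ _ _ (by simp),
    inv_fromBlocks_zero₂₁_of_isUnit_iff _ _ _ (by simp [isUnit_iff_isUnit_det, hA, hE]),
    inv_fromBlocks_zero₁₂_of_isUnit_iff _ _ _ (by simp)]
  simp [Matrix.mul_assoc]

theorem sumElim_dotProduct_inv_fromBlocks_mulVec {α : Type*} [CommRing α] (A : Matrix m m α)
    (B : Matrix m n α) (C : Matrix n m α) (D : Matrix n n α) (hA : IsUnit A.det)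
    (hE : IsUnit (D - C * A⁻¹ * B).det) (u : m → α) (v : n → α) :
    Sum.elim u v ⬝ᵥ ((fromBlocks A B C D)⁻¹ *ᵥ Sum.elim u v) =
      u ⬝ᵥ (A⁻¹ *ᵥ u) +
        (v - u ᵥ* (A⁻¹ * B)) ⬝ᵥ ((D - C * A⁻¹ * B)⁻¹ *ᵥ (v - C *ᵥ (A⁻¹ *ᵥ u))) := by
  simp only [inv_fromBlocks_eq_of_isUnit_det₁₁ A B C D hA hE, ← mulVec_mulVec]
  rw [dotProduct_mulVec, vecMul_fromBlocks, fromBlocks_mulVec, fromBlocks_mulVec]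
  simp [sumElim_dotProduct_sumElim, neg_mulVec, vecMul_neg, neg_dotProduct, ← mulVec_mulVec,
    sub_eq_add_neg, add_comm]

theorem PosDef.posDef_schur₁₁ {𝕜 : Type*} [RCLike 𝕜] {A : Matrix m m 𝕜} {B : Matrix m n 𝕜}
    {C : Matrix n m 𝕜} {D : Matrix n n 𝕜} (h : (fromBlocks A B C D).PosDef) :
    (D - C * A⁻¹ * B).PosDef := by
  obtain ⟨-, rfl, -, -⟩ := isHermitian_fromBlocks_iff.mp h.isHermitian
  have hA := h.posDef_block₁₁
  let := hA.isUnit.invertible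
  refine ((PosDef.fromBlocks₁₁ B D hA).mp h.posSemidef).posDef_iff_det_ne_zero.mpr fun h0 => ?_
  apply h.det_pos.ne'
  rw [det_fromBlocks₁₁, invOf_eq_nonsing_inv, h0, mul_zero]

end Matrix

section Mahalanobis

variable {n : Type*} [Fintype n] [DecidableEq n]

theorem mahalanobis_nonneg {S : Matrix n n ℝ} (hS : S.PosDef) (μ x : n → ℝ) :
    0 ≤ mahalanobis μ S x := by
  have h := hS.inv.posSemidef.dotProduct_mulVec_nonneg (x - μ)
  rwa [star_trivial] at h

theorem mahalanobis_smul {S : Matrix n n ℝ} (hS : IsUnit S.det) {c : ℝ} (hc : c ≠ 0)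
    (μ x : n → ℝ) : mahalanobis μ (c • S) x = c⁻¹ * mahalanobis μ S x := by
  let := invertibleOfNonzero hc
  rw [mahalanobis, inv_smul S c hS, invOf_eq_inv, smul_mulVec, dotProduct_smul, smul_eq_mul,
    mahalanobis]

theorem mahalanobis_sumElim_fromBlocks {m : Type*} [Fintype m] [DecidableEq m]
    {A : Matrix m m ℝ} {B : Matrix m n ℝ} {C : Matrix n m ℝ} {D : Matrix n n ℝ}
    (hS : (fromBlocks A B C D).PosDef) (μ₁ x₁ : m → ℝ) (μ₂ x₂ : n → ℝ) :
    mahalanobis (Sum.elim μ₁ μ₂) (fromBlocks A B C D) (Sum.elim x₁ x₂) =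
      mahalanobis μ₁ A x₁ +
        mahalanobis (μ₂ + C *ᵥ (A⁻¹ *ᵥ (x₁ - μ₁))) (D - C * A⁻¹ * B) x₂ := by
  obtain ⟨hA, hBC, -, -⟩ := isHermitian_fromBlocks_iff.mp hS.isHermitian
  rw [IsHermitian, conjTranspose_eq_transpose_of_trivial] at hA
  rw [conjTranspose_eq_transpose_of_trivial] at hBC
  have hvecMul : (x₁ - μ₁) ᵥ* (A⁻¹ * B) = C *ᵥ (A⁻¹ *ᵥ (x₁ - μ₁)) := by
    rw [← mulVec_transpose, transpose_mul, transpose_nonsing_inv, hA, hBC, mulVec_mulVec]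
  rw [mahalanobis, ← Sum.elim_sub_sub, sumElim_dotProduct_inv_fromBlocks_mulVec A B C D
    hS.posDef_block₁₁.det_pos.ne'.isUnit hS.posDef_schur₁₁.det_pos.ne'.isUnit, hvecMul,
    sub_sub, mahalanobis, mahalanobis]

end Mahalanobis

section StudentT

variable {n : Type*} [Fintype n] [DecidableEq n]

theorem tPdf_div_smul {E : Matrix n n ℝ} (hE : E.PosDef) {c κ : ℝ} (hc : 0 < c) (hκ : 0 < κ)
    (μ x : n → ℝ) :
    tPdf μ ((c / κ) • E) κ x =
      Real.Gamma ((Fintype.card n + κ) / 2) /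
          (Real.Gamma (κ / 2) * π ^ ((Fintype.card n : ℝ) / 2)) * E.det ^ (-(1 : ℝ) / 2) *
        c ^ (κ / 2) * (c + mahalanobis μ E x) ^ (-((Fintype.card n + κ) / 2)) := by
  set q : ℝ := (Fintype.card n : ℝ) with hq
  have hδ := mahalanobis_nonneg hE μ x
  have hcκ : 0 < c / κ := div_pos hc hκ
  have hdet := hE.det_pos
  have hscale : ((c / κ) ^ Fintype.card n * E.det) ^ (-(1 : ℝ) / 2) =
      κ ^ (q / 2) * c ^ (-(q / 2)) * E.det ^ (-(1 : ℝ) / 2) := by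
    rw [mul_rpow (by positivity) hdet.le, ← rpow_natCast, ← rpow_mul hcκ.le,
      div_rpow hc.le hκ.le, ← hq, show q * (-1 / 2) = -(q / 2) by ring, rpow_neg hc.le,
      rpow_neg hκ.le]
    field_simp
  have hkernel : 1 + (c / κ)⁻¹ * mahalanobis μ E x / κ = (c + mahalanobis μ E x) / c := by
    field_simp
  rw [tPdf, det_smul, mahalanobis_smul hE.det_pos.ne'.isUnit hcκ.ne', hscale, hkernel,
    div_rpow (by positivity) hc.le]
  rw [← hq, rpow_neg hc.le, rpow_neg hc.le, add_div, rpow_add hc]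
  field_simp

theorem rpow_mul_tPdf_div_smul {E : Matrix n n ℝ} (hE : E.PosDef) {c κ r : ℝ} (hc : 0 < c)
    (hκ : 0 < κ) (hκr : 0 < κ + 2 * r) (μ x : n → ℝ) :
    ((κ + Fintype.card n) / (c + mahalanobis μ E x)) ^ r * tPdf μ ((c / κ) • E) κ x =
      (κ + Fintype.card n) ^ r *
          (Real.Gamma ((Fintype.card n + κ) / 2) * Real.Gamma ((κ + 2 * r) / 2) /
            (Real.Gamma (κ / 2) * Real.Gamma ((Fintype.card n + (κ + 2 * r)) / 2))) / c ^ r *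
        tPdf μ ((c / (κ + 2 * r)) • E) (κ + 2 * r) x := by
  have hδ := mahalanobis_nonneg hE μ x
  have hΓq := Gamma_pos_of_pos (show 0 < (Fintype.card n + (κ + 2 * r)) / 2 by positivity)
  rw [tPdf_div_smul hE hc hκ, tPdf_div_smul hE hc hκr, div_rpow (by positivity) (by positivity),
    show (κ + 2 * r) / 2 = κ / 2 + r by ring,
    show -((Fintype.card n + (κ + 2 * r)) / 2) = -((Fintype.card n + κ) / 2) + -r by ring,
    rpow_add hc, rpow_add (by positivity), rpow_neg (by positivity) r]
  field_simp

end StudentT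

theorem tPdf_conditional_weighted_moments_general {p1 p2 : ℕ} (ν r : ℝ) (hν : 0 < ν)
    (hr : 0 < ν + (p1 : ℝ) + 2 * r)
    (μ1 : Fin p1 → ℝ) (μ2 : Fin p2 → ℝ)
    (S11 : Matrix (Fin p1) (Fin p1) ℝ) (S12 : Matrix (Fin p1) (Fin p2) ℝ)
    (S21 : Matrix (Fin p2) (Fin p1) ℝ) (S22 : Matrix (Fin p2) (Fin p2) ℝ)
    (hS : (Matrix.fromBlocks S11 S12 S21 S22).PosDef)
    (y1 : Fin p1 → ℝ)
    (B : Set (Fin p2 → ℝ))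
    (f : (Fin p2 → ℝ) → ℝ) :
    ∫ y2 in B,
        ((ν + ((p1 : ℝ) + (p2 : ℝ))) /
            (ν + mahalanobis (Sum.elim μ1 μ2) (Matrix.fromBlocks S11 S12 S21 S22)
              (Sum.elim y1 y2))) ^ r *
          f y2 *
          tPdf (μ2 + S21 *ᵥ (S11⁻¹ *ᵥ (y1 - μ1)))
            (((ν + mahalanobis μ1 S11 y1) / (ν + (p1 : ℝ))) • (S22 - S21 * S11⁻¹ * S12))
            (ν + (p1 : ℝ)) y2
      = ((ν + ((p1 : ℝ) + (p2 : ℝ))) ^ r *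
            (Real.Gamma ((((p1 : ℝ) + (p2 : ℝ)) + ν) / 2) *
              Real.Gamma (((p1 : ℝ) + ν + 2 * r) / 2) /
              (Real.Gamma (((p1 : ℝ) + ν) / 2) *
                Real.Gamma ((((p1 : ℝ) + (p2 : ℝ)) + ν + 2 * r) / 2))) /
          (ν + mahalanobis μ1 S11 y1) ^ r) *
        ∫ y2 in B,
          f y2 *
            tPdf (μ2 + S21 *ᵥ (S11⁻¹ *ᵥ (y1 - μ1)))
              (((ν + mahalanobis μ1 S11 y1) / (ν + 2 * r + (p1 : ℝ))) • (S22 - S21 * S11⁻¹ * S12))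
              (ν + (p1 : ℝ) + 2 * r) y2 := by
  obtain ⟨hs, hκ⟩ : 0 < ν + mahalanobis μ1 S11 y1 ∧ 0 < ν + (p1 : ℝ) :=
    ⟨by linarith [mahalanobis_nonneg hS.posDef_block₁₁ μ1 y1], by positivity⟩
  rw [show ν + 2 * r + (p1 : ℝ) = ν + p1 + 2 * r by ring, ← integral_const_mul]
  congr 1
  funext y2
  have h := rpow_mul_tPdf_div_smul hS.posDef_schur₁₁ hs hκ hr
    (μ2 + S21 *ᵥ (S11⁻¹ *ᵥ (y1 - μ1))) y2
  rw [Fintype.card_fin] at h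
  rw [mahalanobis_sumElim_fromBlocks hS]
  convert congrArg (f y2 * ·) h using 1 <;> ring_nf

/-- Proposition 4: conditional weighted moments of the truncated
multivariate Student's-t. -/
theorem tPdf_conditional_weighted_moments {p1 p2 : ℕ} (ν r : ℝ) (hν : 0 < ν)
    (hr : 0 < ν + (p1 : ℝ) + 2 * r)
    (μ1 : Fin p1 → ℝ) (μ2 : Fin p2 → ℝ)
    (S11 : Matrix (Fin p1) (Fin p1) ℝ) (S12 : Matrix (Fin p1) (Fin p2) ℝ)
    (S21 : Matrix (Fin p2) (Fin p1) ℝ) (S22 : Matrix (Fin p2) (Fin p2) ℝ)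
    (hS : (Matrix.fromBlocks S11 S12 S21 S22).PosDef)
    (y1 : Fin p1 → ℝ)
    (B : Set (Fin p2 → ℝ)) (hB : MeasurableSet B)
    (f : (Fin p2 → ℝ) → ℝ) (hfm : Measurable f)
    (hfi : IntegrableOn
      (fun y2 => f y2 *
        tPdf (μ2 + S21 *ᵥ (S11⁻¹ *ᵥ (y1 - μ1)))
          (((ν + mahalanobis μ1 S11 y1) / (ν + 2 * r + (p1 : ℝ))) • (S22 - S21 * S11⁻¹ * S12))
          (ν + (p1 : ℝ) + 2 * r) y2) B) :
    ∫ y2 in B,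
        ((ν + ((p1 : ℝ) + (p2 : ℝ))) /
            (ν + mahalanobis (Sum.elim μ1 μ2) (Matrix.fromBlocks S11 S12 S21 S22)
              (Sum.elim y1 y2))) ^ r *
          f y2 *
          tPdf (μ2 + S21 *ᵥ (S11⁻¹ *ᵥ (y1 - μ1)))
            (((ν + mahalanobis μ1 S11 y1) / (ν + (p1 : ℝ))) • (S22 - S21 * S11⁻¹ * S12))
            (ν + (p1 : ℝ)) y2
      = ((ν + ((p1 : ℝ) + (p2 : ℝ))) ^ r *
            (Real.Gamma ((((p1 : ℝ) + (p2 : ℝ)) + ν) / 2) *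
              Real.Gamma (((p1 : ℝ) + ν + 2 * r) / 2) /
              (Real.Gamma (((p1 : ℝ) + ν) / 2) *
                Real.Gamma ((((p1 : ℝ) + (p2 : ℝ)) + ν + 2 * r) / 2))) /
          (ν + mahalanobis μ1 S11 y1) ^ r) *
        ∫ y2 in B,
          f y2 *
            tPdf (μ2 + S21 *ᵥ (S11⁻¹ *ᵥ (y1 - μ1)))
              (((ν + mahalanobis μ1 S11 y1) / (ν + 2 * r + (p1 : ℝ))) • (S22 - S21 * S11⁻¹ * S12))
              (ν + (p1 : ℝ) + 2 * r) y2 :=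
  tPdf_conditional_weighted_moments_general ν r hν hr μ1 μ2 S11 S12 S21 S22 hS y1 B f
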